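/- Let f̄, g: ℝ^n → ℝ be convex, F = f̄ + g, let x_* minimize F, and let a positive sequence (a_k) with partial sums A_k = Σ_{ℓ≤k} a_ℓ be given. Suppose points x_k, x⁺_k satisfy x_{k+1} = (A_k/A_{k+1}) x_k + (a_{k+1}/A_{k+1}) x⁺_k. Then for any subgradient s ∈ ∂f̄(x_{k+1}): A_{k+1}(F(x_{k+1}) − F(x_*)) − A_k(F(x_k) − F(x_*)) ≤ a_{k+1}⟨s, x⁺_k − x_*⟩ + a_{k+1}(g(x⁺_k) − g(x_*)). -/

import Mathlib

open scoped RealInnerProductSpace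

/-!
Write `p = A_k`, `q = a_{k+1}`, so that `x_{k+1}` is the `(p, q)`-weighted mean of `x_k` and
`x⁺_k`. Convexity of `g` bounds `(p + q) g(x_{k+1})` by `p g(x_k) + q g(x⁺_k)`. Adding the
subgradient inequalities for `f̄` at `x_{k+1}`, tested against `x_k` with weight `p` and against
`x_*` with weight `q`, the inner-product terms collapse to `q ⟪s, x⁺_k - x_*⟫` because
`p x_k + q x⁺_k = (p + q) x_{k+1}`.
-/

section

variable {E : Type*} [NormedAddCommGroup E] [InnerProductSpace ℝ E]

def HasSubgradientAt (f : E → ℝ) (s z : E) : Prop :=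
  ∀ y, f z + ⟪s, y - z⟫ ≤ f y

theorem HasSubgradientAt.add_mul_le {f : E → ℝ} {s z u v w : E} {p q : ℝ}
    (hs : HasSubgradientAt f s z) (hp : 0 ≤ p) (hq : 0 ≤ q)
    (hz : (p + q) • z = p • u + q • v) :
    (p + q) * f z - p * f u - q * f w ≤ q * ⟪s, v - w⟫ := by
  have hu := mul_le_mul_of_nonneg_left (hs u) hp
  have hw := mul_le_mul_of_nonneg_left (hs w) hq
  have hinner : (p + q) * ⟪s, z⟫ = p * ⟪s, u⟫ + q * ⟪s, v⟫ := by
    rw [← real_inner_smul_right, hz, inner_add_right, real_inner_smul_right,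
      real_inner_smul_right]
  simp only [inner_sub_right] at hu hw ⊢
  linarith

end

theorem add_smul_eq_of_eq_div_smul {E : Type*} [AddCommGroup E] [Module ℝ E] {z u v : E}
    {p q : ℝ} (hpq : p + q ≠ 0) (hz : z = (p / (p + q)) • u + (q / (p + q)) • v) :
    (p + q) • z = p • u + q • v := by
  rw [hz, smul_add, smul_smul, smul_smul, mul_div_cancel₀ _ hpq, mul_div_cancel₀ _ hpq]

theorem ConvexOn.add_mul_le {E : Type*} [AddCommGroup E] [Module ℝ E] {g : E → ℝ}
    (hg : ConvexOn ℝ Set.univ g) {z u v : E} {p q : ℝ} (hp : 0 ≤ p) (hq : 0 ≤ q)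
    (hpq : 0 < p + q) (hz : z = (p / (p + q)) • u + (q / (p + q)) • v) :
    (p + q) * g z ≤ p * g u + q * g v := by
  have hconv := hg.2 (Set.mem_univ u) (Set.mem_univ v) (div_nonneg hp hpq.le)
    (div_nonneg hq hpq.le) (by rw [← add_div, div_self hpq.ne'])
  rw [← hz, smul_eq_mul, smul_eq_mul] at hconv
  calc (p + q) * g z ≤ (p + q) * (p / (p + q) * g u + q / (p + q) * g v) :=
        mul_le_mul_of_nonneg_left hconv hpq.le
    _ = p * g u + q * g v := by field_simp

theorem stmt10_general {n : ℕ} (fbar g F : EuclideanSpace ℝ (Fin n) → ℝ)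
    (hgconv : ConvexOn ℝ Set.univ g)
    (hF : ∀ x, F x = fbar x + g x)
    (xstar : EuclideanSpace ℝ (Fin n))
    (a : ℕ → ℝ) (hapos : ∀ k, 0 < a k)
    (A : ℕ → ℝ) (hA : ∀ k, A k = ∑ ℓ ∈ Finset.range (k + 1), a ℓ)
    (x xp : ℕ → EuclideanSpace ℝ (Fin n))
    (hrec : ∀ k, x (k + 1) = (A k / A (k + 1)) • x k + (a (k + 1) / A (k + 1)) • xp k)
    (k : ℕ) (s : EuclideanSpace ℝ (Fin n))
    (hs : ∀ y, fbar (x (k + 1)) + ⟪s, y - x (k + 1)⟫ ≤ fbar y) :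
    A (k + 1) * (F (x (k + 1)) - F xstar) - A k * (F (x k) - F xstar) ≤
      a (k + 1) * ⟪s, xp k - xstar⟫ + a (k + 1) * (g (xp k) - g xstar) := by
  have hApos : 0 < A k := by
    rw [hA]
    exact Finset.sum_pos (fun i _ => hapos i) ⟨0, Finset.mem_range.2 k.succ_pos⟩
  have hAsucc : A (k + 1) = A k + a (k + 1) := by rw [hA, hA, Finset.sum_range_succ]
  have hx := hrec k
  rw [hAsucc] at hx
  have hpq : 0 < A k + a (k + 1) := add_pos hApos (hapos _)
  have hg := hgconv.add_mul_le hApos.le (hapos _).le hpq hx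
  have hf := HasSubgradientAt.add_mul_le (w := xstar) hs hApos.le (hapos _).le
    (add_smul_eq_of_eq_div_smul hpq.ne' hx)
  rw [hAsucc, hF, hF, hF]
  linarith

theorem stmt10 {n : ℕ} (fbar g F : EuclideanSpace ℝ (Fin n) → ℝ)
    (hfconv : ConvexOn ℝ Set.univ fbar) (hgconv : ConvexOn ℝ Set.univ g)
    (hF : ∀ x, F x = fbar x + g x)
    (xstar : EuclideanSpace ℝ (Fin n)) (hmin : ∀ x, F xstar ≤ F x)
    (a : ℕ → ℝ) (hapos : ∀ k, 0 < a k)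
    (A : ℕ → ℝ) (hA : ∀ k, A k = ∑ ℓ ∈ Finset.range (k + 1), a ℓ)
    (x xp : ℕ → EuclideanSpace ℝ (Fin n))
    (hrec : ∀ k, x (k + 1) = (A k / A (k + 1)) • x k + (a (k + 1) / A (k + 1)) • xp k)
    (k : ℕ) (s : EuclideanSpace ℝ (Fin n))
    (hs : ∀ y, fbar (x (k + 1)) + ⟪s, y - x (k + 1)⟫ ≤ fbar y) :
    A (k + 1) * (F (x (k + 1)) - F xstar) - A k * (F (x k) - F xstar) ≤
      a (k + 1) * ⟪s, xp k - xstar⟫ + a (k + 1) * (g (xp k) - g xstar) :=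
  stmt10_general fbar g F hgconv hF xstar a hapos A hA x xp hrec k s hs
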